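/- arXiv:2308.04289 — 8 statements merged into one kernel-verified Lean document; each statement's English description precedes it below -/
import Mathlib

section
/- A string V is primitive if and only if V occurs in V·V exactly twice (namely as a prefix and as a suffix). -/
/-- `S` occurs in `T` at (0-indexed) position `i`. -/
def occursAt {α : Type*} (T S : List α) (i : ℕ) : Prop :=
  (T.drop i).take S.length = S

/-- `V` is primitive: it is not a proper power. -/
def Primitive {α : Type*} (V : List α) : Prop :=
  ∀ (U : List α) (d : ℕ), 0 < d → V = (List.replicate d U).flatten → d = 1

/-- `p` is a period of `F`. -/
def IsPeriod {α : Type*} (F : List α) (p : ℕ) : Prop :=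
  1 ≤ p ∧ ∀ k, k + p < F.length → F[k]? = F[k + p]?

/-- `p` is the smallest period of `F`. -/
def MinPeriod {α : Type*} (F : List α) (p : ℕ) : Prop :=
  IsPeriod F p ∧ ∀ q, IsPeriod F q → p ≤ q

/-- `(a,b,p)` is a run in `T` (0-indexed, positions `a..b` inclusive). -/
def IsRun {α : Type*} (T : List α) (a b p : ℕ) : Prop :=
  a ≤ b ∧ b < T.length ∧
  MinPeriod ((T.drop a).take (b - a + 1)) p ∧
  2 * p ≤ b - a + 1 ∧
  (a = 0 ∨ T[a - 1]? ≠ T[a - 1 + p]?) ∧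
  (b + 1 = T.length ∨ T[b + 1]? ≠ T[b + 1 - p]?)

/-- `(i,j)` is a consecutive occurrence of `S` in `T`. -/
def ConsOcc {α : Type*} (T S : List α) (i j : ℕ) : Prop :=
  i < j ∧ occursAt T S i ∧ occursAt T S j ∧ ∀ k, i < k → k < j → ¬ occursAt T S k

/-- Overlapping consecutive occurrences of `S` in `T`. -/
def OvOcc {α : Type*} (T S : List α) : Set (ℕ × ℕ) :=
  {q | ConsOcc T S q.1 q.2 ∧ q.2 < q.1 + S.length}

/-- Non-overlapping consecutive occurrences of `S` in `T`. -/
def NovOcc {α : Type*} (T S : List α) : Set (ℕ × ℕ) :=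
  {q | ConsOcc T S q.1 q.2 ∧ q.1 + S.length ≤ q.2}

/-- Positions of `T` covered by occurrences of `S`. -/
def Covered {α : Type*} (T S : List α) : Set ℕ :=
  {k | ∃ i, occursAt T S i ∧ i ≤ k ∧ k < i + S.length}

/-- Number of positions of `T` covered by occurrences of `S`. -/
noncomputable def Cov {α : Type*} (T S : List α) : ℕ := (Covered T S).ncard

/-- Number of occurrences of `S` in `T`. -/
noncomputable def Occ {α : Type*} (T S : List α) : ℕ := {i | occursAt T S i}.ncard

/-- One plus the number of non-overlapping consecutive occurrences. -/
noncomputable def nov {α : Type*} (T S : List α) : ℕ := 1 + (NovOcc T S).ncard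

/-- `S` is right-branching in `T` (end of text acts as a special end marker `none`). -/
def RightBranching {α : Type*} (T S : List α) : Prop :=
  ∃ i j, occursAt T S i ∧ occursAt T S j ∧ T[i + S.length]? ≠ T[j + S.length]?

section Aux

lemma pow_split {α : Type*} (Z : List α) (a b : ℕ) :
    (List.replicate (a + b) Z).flatten =
      (List.replicate a Z).flatten ++ (List.replicate b Z).flatten := by
  rw [List.replicate_add, List.flatten_append]

lemma comm_pow_le {α : Type*} : ∀ (n : ℕ) (X Y : List α), Y.length ≤ n →
    X.length ≤ Y.length → X ≠ [] → X ++ Y = Y ++ X →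
    ∃ (Z : List α) (a b : ℕ), 0 < a ∧ 0 < b ∧
      X = (List.replicate a Z).flatten ∧ Y = (List.replicate b Z).flatten := by
  intro n
  induction n with
  | zero =>
    intro X Y hn hle hX _
    exfalso
    have : 0 < X.length := List.length_pos_iff.mpr hX
    omega
  | succ n ih =>
    intro X Y hn hle hX hcomm
    have hXpos : 0 < X.length := List.length_pos_iff.mpr hX
    have hpre : X = Y.take X.length := by
      have h1 := congrArg (List.take X.length) hcomm
      rwa [List.take_left, List.take_append_of_le_length hle] at h1
    have hYsplit : Y = X ++ Y.drop X.length := by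
      conv_lhs => rw [← List.take_append_drop X.length Y, ← hpre]
    set Y' := Y.drop X.length with hY'
    by_cases hY'e : Y' = []
    · refine ⟨X, 1, 1, one_pos, one_pos, by simp, ?_⟩
      rw [hYsplit, hY'e]; simp
    · have hcomm' : X ++ Y' = Y' ++ X := by
        rw [hYsplit, List.append_assoc] at hcomm
        exact List.append_cancel_left hcomm
      have hY'pos : 0 < Y'.length := List.length_pos_iff.mpr hY'e
      have hYlen : Y.length = X.length + Y'.length := by
        conv_lhs => rw [hYsplit]
        simp
      rcases le_or_gt X.length Y'.length with hc | hc
      · obtain ⟨Z, a, b, ha, hb, hXZ, hYZ⟩ :=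
          ih X Y' (by omega) hc hX hcomm'
        exact ⟨Z, a, a + b, ha, by omega, hXZ, by
          rw [hYsplit, pow_split, ← hXZ, ← hYZ]⟩
      · obtain ⟨Z, a, b, ha, hb, hXZ, hYZ⟩ :=
          ih Y' X (by omega) (le_of_lt hc) hY'e hcomm'.symm
        exact ⟨Z, b, b + a, hb, by omega, hYZ, by
          rw [hYsplit, pow_split, ← hXZ, ← hYZ]⟩

lemma comm_pow {α : Type*} (X Y : List α) (hX : X ≠ []) (hY : Y ≠ [])
    (hcomm : X ++ Y = Y ++ X) :
    ∃ (Z : List α) (a b : ℕ), 0 < a ∧ 0 < b ∧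
      X = (List.replicate a Z).flatten ∧ Y = (List.replicate b Z).flatten := by
  rcases le_or_gt X.length Y.length with h | h
  · exact comm_pow_le Y.length X Y le_rfl h hX hcomm
  · obtain ⟨Z, a, b, ha, hb, h1, h2⟩ :=
      comm_pow_le X.length Y X le_rfl (le_of_lt h) hY hcomm.symm
    exact ⟨Z, b, a, hb, ha, h2, h1⟩

end Aux

lemma occ_bound {α : Type*} {V : List α} (hV : V ≠ []) {i : ℕ}
    (h : occursAt (V ++ V) V i) : i ≤ V.length := by
  have hl := congrArg List.length h
  simp [List.length_take, List.length_drop] at hl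
  have : 0 < V.length := List.length_pos_iff.mpr hV
  omega

lemma occ_iff {α : Type*} {V : List α} {i : ℕ} (h : i ≤ V.length) :
    occursAt (V ++ V) V i ↔ V.drop i ++ V.take i = V := by
  unfold occursAt
  rw [List.drop_append_of_le_length h, List.take_append,
    List.take_of_length_le (by simp)]
  have : V.length - (V.drop i).length = i := by simp; omega
  rw [this]

theorem stmt0 {α : Type*} (V : List α) :
    Primitive V ↔ {i : ℕ | occursAt (V ++ V) V i}.ncard = 2 := by
  constructor
  · intro hP
    have hV : V ≠ [] := by
      intro he
      have := hP [] 2 (by norm_num) (by simp [he])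
      omega
    have hn : 0 < V.length := List.length_pos_iff.mpr hV
    have hset : {i : ℕ | occursAt (V ++ V) V i} = {0, V.length} := by
      ext i
      simp only [Set.mem_setOf_eq, Set.mem_insert_iff, Set.mem_singleton_iff]
      constructor
      · intro hi
        have hle := occ_bound hV hi
        have heq := (occ_iff hle).mp hi
        by_contra hcon
        push_neg at hcon
        obtain ⟨h0, hN⟩ := hcon
        have hilt : i < V.length := lt_of_le_of_ne hle hN
        have hipos : 0 < i := Nat.pos_of_ne_zero h0
        have hX : V.take i ≠ [] := by
          rw [← List.length_pos_iff, List.length_take]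
          omega
        have hY : V.drop i ≠ [] := by
          rw [← List.length_pos_iff, List.length_drop]
          omega
        have hcomm : V.take i ++ V.drop i = V.drop i ++ V.take i := by
          rw [List.take_append_drop, heq]
        obtain ⟨Z, a, b, ha, hb, h1, h2⟩ := comm_pow _ _ hX hY hcomm
        have hVZ : V = (List.replicate (a + b) Z).flatten := by
          rw [pow_split, ← h1, ← h2, List.take_append_drop]
        have := hP Z (a + b) (by omega) hVZ
        omega
      · rintro (rfl | rfl)
        · exact (occ_iff (Nat.zero_le _)).mpr (by simp)
        · exact (occ_iff le_rfl).mpr (by simp)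
    rw [hset, Set.ncard_pair (by omega : (0 : ℕ) ≠ V.length)]
  · intro h2 U d hd hVU
    by_contra hd1
    have hd2 : 2 ≤ d := by omega
    by_cases hU : U = []
    · have hVe : V = [] := by simp [hVU, hU]
      have huniv : {i : ℕ | occursAt (V ++ V) V i} = Set.univ := by
        ext i
        simp [occursAt, hVe]
      rw [huniv, Set.Infinite.ncard Set.infinite_univ] at h2
      omega
    · have hUpos : 0 < U.length := List.length_pos_iff.mpr hU
      obtain ⟨e, rfl⟩ : ∃ e, d = e + 1 := ⟨d - 1, by omega⟩
      have hsplit : V = U ++ (List.replicate e U).flatten := by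
        rw [hVU, List.replicate_succ, List.flatten_cons]
      have hVlen : V.length = U.length + e * U.length := by
        rw [hsplit]; simp [List.length_flatten, List.map_replicate]
      have hV : V ≠ [] := by
        rw [← List.length_pos_iff, hVlen]
        omega
      have hUlt : U.length < V.length := by
        rw [hVlen]
        have h1 : 0 < e * U.length := Nat.mul_pos (by omega) hUpos
        omega
      have hoccU : occursAt (V ++ V) V U.length := by
        rw [occ_iff (le_of_lt hUlt)]
        conv_lhs => rw [hsplit, List.drop_left, List.take_left]
        have : (List.replicate e U).flatten ++ U
            = (List.replicate (e + 1) U).flatten := by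
          rw [pow_split U e 1]; simp
        rw [this, ← hVU, hsplit]
      have hocc0 : occursAt (V ++ V) V 0 :=
        (occ_iff (Nat.zero_le _)).mpr (by simp)
      have hoccN : occursAt (V ++ V) V V.length :=
        (occ_iff le_rfl).mpr (by simp)
      have hsub : ({0, U.length, V.length} : Set ℕ) ⊆
          {i : ℕ | occursAt (V ++ V) V i} := by
        rintro i (rfl | rfl | rfl) <;> assumption
      have hfin : {i : ℕ | occursAt (V ++ V) V i}.Finite :=
        (Set.finite_Iic V.length).subset (fun i hi => occ_bound hV hi)
      have h3 : ({0, U.length, V.length} : Set ℕ).ncard = 3 := by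
        rw [Set.ncard_insert_of_notMem (by simp; omega)
            ((Set.finite_Iic V.length).subset (by intro x hx; simp at hx; rcases hx with rfl|rfl <;> simp; omega)),
          Set.ncard_pair (by omega)]
      have := Set.ncard_le_ncard hsub hfin
      omega
end

section
/- Let (a,b,p) be a run in T, let i satisfy a ≤ i ≤ b - 2p, and let d satisfy p < d ≤ b - p - i + 1. Then (i, i+p) is a consecutive occurrence of S = T[i..i+d) in T; that is, S does not occur at any position strictly between i and i + p. -/
theorem stmt3 {α : Type*} (T : List α) (a b p i d : ℕ)
    (hrun : IsRun T a b p) (hia : a ≤ i) (hib : i + 2 * p ≤ b)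
    (hd1 : p < d) (hd2 : d + p + i ≤ b + 1) :
    ConsOcc T ((T.drop i).take d) i (i + p) := by
  obtain ⟨hab, hbT, ⟨⟨hp1, hper⟩, hmin⟩, h2p, -, -⟩ := hrun
  have hWlen : ((T.drop a).take (b - a + 1)).length = b - a + 1 := by
    simp [List.length_take, List.length_drop]; omega
  have hW : ∀ m, m ≤ b - a → ((T.drop a).take (b - a + 1))[m]? = T[a + m]? := by
    intro m hm
    rw [List.getElem?_take, if_pos (by omega), List.getElem?_drop]
  -- period p of the run, phrased on T
  have hA : ∀ m, a ≤ m → m + p ≤ b → T[m]? = T[m + p]? := by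
    intro m h1 h2
    have h3 := hper (m - a) (by rw [hWlen]; omega)
    rw [hW (m - a) (by omega), hW (m - a + p) (by omega)] at h3
    rw [show a + (m - a) = m by omega, show a + (m - a + p) = m + p by omega] at h3
    exact h3
  have hSlen : ((T.drop i).take d).length = d := by
    simp [List.length_take, List.length_drop]; omega
  have hocc_i : occursAt T ((T.drop i).take d) i := by
    unfold occursAt; rw [hSlen]
  have hocc_ip : occursAt T ((T.drop i).take d) (i + p) := by
    unfold occursAt; rw [hSlen]
    apply List.ext_getElem?
    intro n
    by_cases hn : n < d
    · rw [List.getElem?_take, if_pos hn, List.getElem?_take, if_pos hn,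
        List.getElem?_drop, List.getElem?_drop]
      have := hA (i + n) (by omega) (by omega)
      rw [show i + p + n = i + n + p by omega]
      exact this.symm
    · rw [List.getElem?_eq_none (by
        simp [List.length_take, List.length_drop]; omega),
        List.getElem?_eq_none (by
        simp [List.length_take, List.length_drop]; omega)]
  refine ⟨by omega, hocc_i, hocc_ip, ?_⟩
  intro k hik hki hocc
  set q := k - i with hq
  have hkiq : k = i + q := by omega
  have hq1 : 1 ≤ q := by omega
  have hqp : q < p := by omega
  -- the occurrence at k gives period q on the window [i, i+d)
  have hB : ∀ m, i ≤ m → m < i + d → T[m]? = T[m + q]? := by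
    intro m h1 h2
    unfold occursAt at hocc
    rw [hSlen] at hocc
    have := congrArg (fun l => l[m - i]?) hocc
    rw [List.getElem?_take, if_pos (by omega), List.getElem?_take, if_pos (by omega),
      List.getElem?_drop, List.getElem?_drop] at this
    rw [show k + (m - i) = m + q by omega, show i + (m - i) = m by omega] at this
    exact this.symm
  -- propagate period q to the right part of the run
  have Hhigh : ∀ m, i ≤ m → m + q ≤ b → T[m]? = T[m + q]? := by
    intro m
    induction m using Nat.strong_induction_on with
    | _ m IH =>
      intro h1 h2
      by_cases hmd : m < i + d
      · exact hB m h1 hmd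
      · obtain ⟨m', rfl⟩ : ∃ m', m = m' + p := ⟨m - p, by omega⟩
        have e1 : T[m' + p]? = T[m']? := (hA m' (by omega) (by omega)).symm
        have e2 : T[m' + q]? = T[m' + q + p]? := hA (m' + q) (by omega) (by omega)
        have e3 : T[m']? = T[m' + q]? := IH m' (by omega) (by omega) (by omega)
        rw [e1, e3, e2, show m' + q + p = m' + p + q by omega]
  -- propagate period q to the left part of the run
  have Hlow : ∀ j m, a ≤ m → m < i → i ≤ m + j → T[m]? = T[m + q]? := by
    intro j
    induction j with
    | zero => intro m _ h2 h3; omega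
    | succ j IH =>
      intro m h1 h2 h3
      have e1 : T[m]? = T[m + p]? := hA m h1 (by omega)
      have e2 : T[m + q]? = T[m + q + p]? := hA (m + q) (by omega) (by omega)
      have e3 : T[m + p]? = T[m + p + q]? := by
        by_cases h : i ≤ m + p
        · exact Hhigh (m + p) h (by omega)
        · exact IH (m + p) (by omega) (by omega) (by omega)
      rw [e1, e2, e3, show m + p + q = m + q + p by omega]
  -- hence q is a period of the run, contradicting minimality of p
  have hq_per : IsPeriod ((T.drop a).take (b - a + 1)) q := by
    refine ⟨hq1, ?_⟩
    intro t ht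
    rw [hWlen] at ht
    rw [hW t (by omega), hW (t + q) (by omega), show a + (t + q) = a + t + q by omega]
    by_cases h : a + t < i
    · exact Hlow i (a + t) (by omega) h (by omega)
    · exact Hhigh (a + t) (by omega) (by omega)
  have := hmin q hq_per
  omega
end

section
/- If X is a primitive string and X occurs in the square X·X at position k (1-indexed), then k = 1 or k = |X| + 1; i.e., a primitive string has no internal occurrence in its own square. -/
namespace List

variable {α : Type*}

theorem iterate_rotate_one (l : List α) (m : ℕ) : (rotate · 1)^[m] l = l.rotate m := by
  induction m with
  | zero => simp
  | succ m ih => rw [Function.iterate_succ_apply', ih, rotate_rotate]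

theorem rotate_gcd_eq_self {l : List α} {m n : ℕ} (hm : l.rotate m = l) (hn : l.rotate n = l) :
    l.rotate (m.gcd n) = l := by
  have hpm : Function.IsPeriodicPt (rotate · 1) m l := by
    rw [Function.IsPeriodicPt, Function.IsFixedPt, iterate_rotate_one, hm]
  have hpn : Function.IsPeriodicPt (rotate · 1) n l := by
    rw [Function.IsPeriodicPt, Function.IsFixedPt, iterate_rotate_one, hn]
  simpa only [Function.IsPeriodicPt, Function.IsFixedPt, iterate_rotate_one] using hpm.gcd hpn

theorem take_length_eq_and_rotate_length_eq_of_append_comm {u v : List α} (h : u ++ v = v ++ u)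
    (huv : u.length ≤ v.length) : v.take u.length = u ∧ v.rotate u.length = v := by
  have htake : v.take u.length = u := by
    simpa [take_append_of_le_length huv] using (congrArg (take u.length) h).symm
  refine ⟨htake, ?_⟩
  calc v.rotate u.length = v.drop u.length ++ u := by rw [rotate_eq_drop_append_take huv, htake]
    _ = (v ++ u).drop u.length := (drop_append_of_le_length huv).symm
    _ = v := by rw [← h, drop_left]

theorem eq_flatten_replicate_take_of_rotate_eq_self {g : ℕ} :
    ∀ {d : ℕ} {l : List α}, l.length = d * g → l.rotate g = l →
      l = (replicate d (l.take g)).flatten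
  | 0, l, hlen, _ => by simpa using hlen
  | d + 1, l, hlen, hrot => by
    have hgl : g ≤ l.length := by rw [hlen]; exact Nat.le_mul_of_pos_left g d.succ_pos
    set u := l.take g
    set v := l.drop g
    have hu : u.length = g := length_take_of_le hgl
    have hv : v.length = d * g := by rw [length_drop, hlen, Nat.succ_mul, Nat.add_sub_cancel]
    have hcomm : u ++ v = v ++ u := by
      rw [take_append_drop, ← rotate_eq_drop_append_take hgl, hrot]
    rcases Nat.eq_zero_or_pos d with rfl | hd
    · rw [zero_add, one_mul] at hlen
      simp [u, take_of_length_le hlen.le]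
    have huv : u.length ≤ v.length := by rw [hu, hv]; exact Nat.le_mul_of_pos_left g hd
    obtain ⟨htake, hrotv⟩ := take_length_eq_and_rotate_length_eq_of_append_comm hcomm huv
    rw [hu] at htake hrotv
    have ih := eq_flatten_replicate_take_of_rotate_eq_self hv hrotv
    rw [htake] at ih
    rw [replicate_succ, flatten_cons, ← ih, take_append_drop]

end List

theorem occursAt.add_length_le {α : Type*} {T S : List α} {i : ℕ} (h : occursAt T S i)
    (hS : S ≠ []) : i + S.length ≤ T.length := by
  have hS_pos := List.length_pos_iff.mpr hS
  have hlen := congrArg List.length h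
  simp only [List.length_take, List.length_drop] at hlen
  omega

theorem rotate_eq_self_of_occursAt_append_self {α : Type*} {X : List α} {k : ℕ}
    (h : occursAt (X ++ X) X k) : X.rotate k = X := by
  rcases eq_or_ne X [] with rfl | hX
  · simp
  have hk : k ≤ X.length := by simpa using h.add_length_le hX
  rw [occursAt, List.drop_append_of_le_length hk, List.take_append, List.length_drop,
    List.take_of_length_le (by simp), Nat.sub_sub_self hk] at h
  rwa [List.rotate_eq_drop_append_take hk]

theorem Primitive.ne_nil {α : Type*} {X : List α} (hX : Primitive X) : X ≠ [] := by
  rintro rfl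
  simpa using hX [] 2 two_pos (by simp)

theorem Primitive.length_dvd_of_rotate_eq_self {α : Type*} {X : List α} (hX : Primitive X)
    {k : ℕ} (hk : X.rotate k = X) : X.length ∣ k := by
  have hg : X.rotate (k.gcd X.length) = X := List.rotate_gcd_eq_self hk X.rotate_length
  obtain ⟨d, hd⟩ := Nat.gcd_dvd_right k X.length
  have hd1 : d = 1 := by
    have hdpos : 0 < d := Nat.pos_of_ne_zero fun h => hX.ne_nil (by simpa [h] using hd)
    exact hX _ d hdpos
      (List.eq_flatten_replicate_take_of_rotate_eq_self (hd.trans (mul_comm _ _)) hg)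
  rw [hd, hd1, mul_one]
  exact Nat.gcd_dvd_left k X.length

theorem stmt4 {α : Type*} (X : List α) (hX : Primitive X) (k : ℕ)
    (hocc : occursAt (X ++ X) X k) :
    k = 0 ∨ k = X.length := by
  have hle : k + X.length ≤ X.length + X.length := by simpa using hocc.add_length_le hX.ne_nil
  obtain ⟨c, rfl⟩ := hX.length_dvd_of_rotate_eq_self (rotate_eq_self_of_occursAt_append_self hocc)
  rcases c with _ | _ | c
  · simp
  · simp
  · left; nlinarith
end

section
/- For a string T with distinguished end marker (or simply any string T), for every substring S of T, Cov(S) = CovOv(S) + nov(S)·|S|, where Cov(S) is the number of positions of T covered by occurrences of S, CovOv(S) = Σ_{(i,j) ∈ OvOcc(S)} (j - i), and nov(S) is one plus the number of non-overlapping consecutive occurrences of S in T. -/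
/-!
Write `s = |S|`. Adding occurrences from right to left, the window `[i, i + s)` of an occurrence
`i` meets the part already covered exactly in `[j, i + s)`, where `j` is the next occurrence, so
it contributes `min (j - i) s` new positions. Hence `Cov(S) = s + Σ min (j - i) s` over consecutive
occurrences `(i, j)`, and the minimum is `j - i` for overlapping pairs and `s` otherwise.
-/

def consecutivePairs (F : Finset ℕ) : Finset (ℕ × ℕ) :=
  (F ×ˢ F).filter fun q => q.1 < q.2 ∧ ∀ k ∈ F, ¬ (q.1 < k ∧ k < q.2)

theorem mem_consecutivePairs {F : Finset ℕ} {i j : ℕ} :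
    (i, j) ∈ consecutivePairs F ↔
      i ∈ F ∧ j ∈ F ∧ i < j ∧ ∀ k ∈ F, ¬ (i < k ∧ k < j) := by
  simp [consecutivePairs, and_assoc]

theorem consecutivePairs_singleton (a : ℕ) : consecutivePairs {a} = ∅ := by
  ext ⟨i, j⟩
  simp only [mem_consecutivePairs, Finset.mem_singleton, Finset.notMem_empty, iff_false]
  omega

theorem consecutivePairs_insert_of_forall_lt {F : Finset ℕ} (hF : F.Nonempty) {a : ℕ}
    (ha : ∀ x ∈ F, a < x) :
    consecutivePairs (insert a F) = insert (a, F.min' hF) (consecutivePairs F) := by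
  have hmin : ∀ x ∈ F, F.min' hF ≤ x := F.min'_le
  ext ⟨i, j⟩
  simp only [mem_consecutivePairs, Finset.mem_insert, Prod.mk.injEq]
  constructor
  · rintro ⟨rfl | hi, rfl | hj, hij, hgap⟩
    · omega
    · refine Or.inl ⟨rfl, le_antisymm ?_ (hmin j hj)⟩
      by_contra h
      exact hgap _ (Or.inr (F.min'_mem hF)) ⟨ha _ (F.min'_mem hF), by omega⟩
    · exact absurd (ha i hi) (by omega)
    · exact Or.inr ⟨hi, hj, hij, fun k hk => hgap k (Or.inr hk)⟩
  · rintro (⟨rfl, rfl⟩ | ⟨hi, hj, hij, hgap⟩)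
    · refine ⟨Or.inl rfl, Or.inr (F.min'_mem hF), ha _ (F.min'_mem hF), ?_⟩
      rintro k (rfl | hk) ⟨h1, h2⟩
      · omega
      · exact absurd (hmin k hk) (by omega)
    · refine ⟨Or.inr hi, Or.inr hj, hij, ?_⟩
      rintro k (rfl | hk)
      · have := ha i hi; omega
      · exact hgap k hk

theorem card_biUnion_Ico_eq_add_sum_min (s : ℕ) {F : Finset ℕ} (hF : F.Nonempty) :
    (F.biUnion fun i => Finset.Ico i (i + s)).card
      = s + ∑ q ∈ consecutivePairs F, min (q.2 - q.1) s := by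
  induction F using Finset.induction_on_min with
  | empty => exact absurd hF Finset.not_nonempty_empty
  | insert a F ha ih =>
    rcases F.eq_empty_or_nonempty with rfl | hF'
    · simp [consecutivePairs_singleton]
    have hnot : (a, F.min' hF') ∉ consecutivePairs F :=
      fun h => (ha a ((mem_consecutivePairs.mp h).1)).false
    rw [Finset.biUnion_insert, consecutivePairs_insert_of_forall_lt hF' ha,
      Finset.sum_insert hnot]
    have hcard := ih hF'
    have hlt := ha _ (F.min'_mem hF')
    set B := F.biUnion fun i => Finset.Ico i (i + s)
    have hB : ∀ x ∈ B, F.min' hF' ≤ x := by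
      intro x hx
      obtain ⟨i, hi, hx⟩ := Finset.mem_biUnion.mp hx
      exact (F.min'_le i hi).trans (Finset.mem_Ico.mp hx).1
    have hinter : Finset.Ico a (a + s) ∩ B = Finset.Ico (F.min' hF') (a + s) := by
      ext x
      simp only [Finset.mem_inter, Finset.mem_Ico]
      constructor
      · rintro ⟨⟨-, hx⟩, hxB⟩
        exact ⟨hB x hxB, hx⟩
      · rintro ⟨h1, h2⟩
        refine ⟨⟨by omega, h2⟩, Finset.mem_biUnion.mpr ⟨_, F.min'_mem hF', ?_⟩⟩
        exact Finset.mem_Ico.mpr ⟨h1, by omega⟩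
    have hunion := Finset.card_union_add_card_inter (Finset.Ico a (a + s)) B
    rw [hinter, Nat.card_Ico, Nat.card_Ico] at hunion
    omega

theorem sum_min_sub_eq_sum_filter_add_card_mul {C : Finset (ℕ × ℕ)} (s : ℕ) :
    ∑ q ∈ C, min (q.2 - q.1) s
      = ∑ q ∈ C.filter (fun q => q.2 < q.1 + s), (q.2 - q.1)
        + (C.filter fun q => q.1 + s ≤ q.2).card * s := by
  rw [← Finset.sum_filter_add_sum_filter_not C (fun q => q.2 < q.1 + s)]
  congr 1
  · exact Finset.sum_congr rfl fun q hq => by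
      have := (Finset.mem_filter.mp hq).2; omega
  · rw [Finset.card_eq_sum_ones, Finset.sum_mul, Finset.sum_filter, Finset.sum_filter]
    exact Finset.sum_congr rfl fun q _ => by split_ifs <;> omega

section Occurrences

variable {α : Type*} {T S : List α}

theorem add_length_le_of_occursAt (hS : S ≠ []) {i : ℕ} (h : occursAt T S i) :
    i + S.length ≤ T.length := by
  have hlen := congrArg List.length h
  have hpos : 0 < S.length := List.length_pos_iff.mpr hS
  simp only [List.length_take, List.length_drop] at hlen
  omega

variable [DecidableEq α]

instance (T S : List α) : DecidablePred (occursAt T S) :=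
  fun _ => inferInstanceAs (Decidable (_ = _))

def occurrences (T S : List α) : Finset ℕ :=
  (Finset.range T.length).filter (occursAt T S)

theorem mem_occurrences (hS : S ≠ []) {i : ℕ} : i ∈ occurrences T S ↔ occursAt T S i := by
  simp only [occurrences, Finset.mem_filter, Finset.mem_range, and_iff_right_iff_imp]
  intro h
  have := add_length_le_of_occursAt hS h
  have := List.length_pos_iff.mpr hS
  omega

theorem covered_eq_biUnion (hS : S ≠ []) :
    Covered T S = ↑((occurrences T S).biUnion fun i => Finset.Ico i (i + S.length)) := by
  ext k
  simp only [Covered, Set.mem_ofPred_eq, Finset.coe_biUnion, Finset.mem_coe, Finset.coe_Ico,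
    Set.mem_iUnion, Set.mem_Ico, mem_occurrences hS, exists_prop]

theorem consOcc_iff_mem_consecutivePairs (hS : S ≠ []) {i j : ℕ} :
    ConsOcc T S i j ↔ (i, j) ∈ consecutivePairs (occurrences T S) := by
  simp only [ConsOcc, mem_consecutivePairs, mem_occurrences hS, not_and]
  tauto

theorem ovOcc_eq_filter (hS : S ≠ []) :
    OvOcc T S =
      ↑((consecutivePairs (occurrences T S)).filter fun q => q.2 < q.1 + S.length) := by
  ext ⟨i, j⟩
  simp [OvOcc, consOcc_iff_mem_consecutivePairs hS]

theorem novOcc_eq_filter (hS : S ≠ []) :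
    NovOcc T S =
      ↑((consecutivePairs (occurrences T S)).filter fun q => q.1 + S.length ≤ q.2) := by
  ext ⟨i, j⟩
  simp [NovOcc, consOcc_iff_mem_consecutivePairs hS]

end Occurrences

theorem stmt7 {α : Type*} (T S : List α) (hS : S ≠ [])
    (hsub : ∃ i, occursAt T S i) :
    Cov T S = (∑ᶠ q ∈ OvOcc T S, (q.2 - q.1)) + nov T S * S.length := by
  classical
  obtain ⟨i, hi⟩ := hsub
  have hne : (occurrences T S).Nonempty := ⟨i, (mem_occurrences hS).mpr hi⟩
  rw [Cov, covered_eq_biUnion hS, Set.ncard_coe_finset, card_biUnion_Ico_eq_add_sum_min _ hne,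
    sum_min_sub_eq_sum_filter_add_card_mul, nov, ovOcc_eq_filter hS, novOcc_eq_filter hS,
    finsum_mem_coe_finset, Set.ncard_coe_finset]
  ring
end

section
/- For any substring S of T, the number of positions covered by occurrences of S in T equals Σ over all occurrences starting positions i of min(|S|, next(i) - i), where next(i) is the next occurrence position of S after i (and next(i) - i is taken to be |S| for the last occurrence). Equivalently, occ(S)·|S| minus Σ_{(i,j)∈OvOcc(S)} (|S| - (j - i)). -/
/-!
Attribute every covered position to the last occurrence starting at or before it. The occurrence
at `i` then owns exactly the positions `[i, min (i + |S|) (next i))`, where `next i` is the next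
occurrence, or `i + |S|` for the last one, so these blocks partition
the covered set and the occurrence at `i` contributes `min |S| (next i - i)` to `Cov S`. Since
`min a b + (a - b) = a`, this falls short of `|S|` by exactly the overlap `|S| - (next i - i)`,
which is nonzero precisely when `(i, next i)` is an overlapping consecutive occurrence.
-/

open Finset

def nextAfter (Q : Finset ℕ) (i d : ℕ) : ℕ :=
  if h : (Q.filter (i < ·)).Nonempty then (Q.filter (i < ·)).min' h else d

section nextAfter

variable {Q : Finset ℕ} {i j k d : ℕ}

lemma nextAfter_le (hj : j ∈ Q) (hij : i < j) : nextAfter Q i d ≤ j := by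
  have hmem : j ∈ Q.filter (i < ·) := mem_filter.mpr ⟨hj, hij⟩
  rw [nextAfter, dif_pos ⟨j, hmem⟩]
  exact min'_le _ j hmem

lemma le_nextAfter (hk : ∀ j ∈ Q, i < j → k ≤ j) (hd : k ≤ d) : k ≤ nextAfter Q i d := by
  unfold nextAfter
  split_ifs with h
  · exact le_min' _ h k fun j hj => hk j (mem_filter.mp hj).1 (mem_filter.mp hj).2
  · exact hd

lemma nextAfter_mem_or_eq :
    (nextAfter Q i d ∈ Q ∧ i < nextAfter Q i d) ∨ nextAfter Q i d = d := by
  unfold nextAfter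
  split_ifs with h
  · exact .inl (mem_filter.mp (min'_mem _ h))
  · exact .inr rfl

lemma nextAfter_eq_iff (hj : j ∈ Q) (hij : i < j) :
    nextAfter Q i d = j ↔ ∀ k ∈ Q, i < k → j ≤ k := by
  constructor
  · rintro rfl k hk hik
    exact nextAfter_le hk hik
  · intro h
    refine le_antisymm (nextAfter_le hj hij) ?_
    unfold nextAfter
    rw [dif_pos ⟨j, mem_filter.mpr ⟨hj, hij⟩⟩]
    exact le_min' _ _ _ fun k hk => h k (mem_filter.mp hk).1 (mem_filter.mp hk).2

end nextAfter

theorem card_biUnion_Ico_eq_sum_min (Q : Finset ℕ) (L : ℕ) :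
    (Q.biUnion fun i => Ico i (i + L)).card = ∑ i ∈ Q, min L (nextAfter Q i (i + L) - i) := by
  set block := fun i => Ico i (min (i + L) (nextAfter Q i (i + L)))
  have hunion : Q.biUnion (fun i => Ico i (i + L)) = Q.biUnion block := by
    ext k
    simp only [mem_biUnion, mem_Ico, block, lt_min_iff]
    constructor
    · rintro ⟨i, hi, hik, hki⟩
      have hne : (Q.filter (· ≤ k)).Nonempty := ⟨i, mem_filter.mpr ⟨hi, hik⟩⟩
      obtain ⟨hmQ, hmk⟩ := mem_filter.mp ((Q.filter (· ≤ k)).max'_mem hne)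
      have hle : i ≤ (Q.filter (· ≤ k)).max' hne := le_max' _ i (mem_filter.mpr ⟨hi, hik⟩)
      refine ⟨_, hmQ, hmk, by omega, le_nextAfter (k := k + 1) (fun j hj hlt => ?_) (by omega)⟩
      by_contra! hjk
      have := le_max' (Q.filter (· ≤ k)) j (mem_filter.mpr ⟨hj, by omega⟩)
      omega
    · rintro ⟨i, hi, hik, hki, -⟩
      exact ⟨i, hi, hik, hki⟩
  have hdisj : (Q : Set ℕ).PairwiseDisjoint block := by
    have key : ∀ i ∈ Q, ∀ j ∈ Q, i < j → Disjoint (block i) (block j) := fun i _ j hj hij => by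
      have := nextAfter_le (d := i + L) hj hij
      simp only [block, disjoint_left, mem_Ico]
      omega
    intro i hi j hj hne
    rcases lt_or_gt_of_ne hne with h | h
    · exact key i hi j hj h
    · exact (key j hj i hi h).symm
  rw [hunion, card_biUnion hdisj]
  refine sum_congr rfl fun i _ => ?_
  rw [Nat.card_Ico]
  omega

section occurrences

variable {α : Type*} {T S : List α}

lemma occursAt_lt_length (hS : S ≠ []) {i : ℕ} (h : occursAt T S i) : i < T.length := by
  have hlen := congrArg List.length h
  simp only [List.length_take, List.length_drop] at hlen
  have := List.length_pos_iff.mpr hS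
  omega

lemma finite_setOf_occursAt (hS : S ≠ []) : {i | occursAt T S i}.Finite :=
  (Set.finite_Iio T.length).subset fun _ => occursAt_lt_length hS

variable {Q : Finset ℕ} (hQ : ∀ i, i ∈ Q ↔ occursAt T S i)
include hQ

lemma consOcc_iff {i j d : ℕ} :
    ConsOcc T S i j ↔ i ∈ Q ∧ j ∈ Q ∧ i < j ∧ nextAfter Q i d = j := by
  simp only [ConsOcc, ← hQ]
  constructor
  · rintro ⟨hij, hi, hj, hbetween⟩
    refine ⟨hi, hj, hij, (nextAfter_eq_iff hj hij).mpr fun k hk hik => ?_⟩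
    by_contra! hkj
    exact hbetween k hik hkj hk
  · rintro ⟨hi, hj, hij, rfl⟩
    exact ⟨hij, hi, hj, fun k hik hkj hk => absurd (nextAfter_le (d := d) hk hik) (by omega)⟩

lemma ovOcc_eq_image :
    OvOcc T S = (fun i => (i, nextAfter Q i (i + S.length))) ''
      ↑(Q.filter fun i => nextAfter Q i (i + S.length) < i + S.length) := by
  ext ⟨i, j⟩
  simp only [OvOcc, Set.mem_ofPred_eq, consOcc_iff hQ (d := i + S.length), Set.mem_image,
    coe_filter, Prod.mk.injEq]
  constructor
  · rintro ⟨⟨hi, -, -, rfl⟩, hov⟩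
    exact ⟨i, ⟨hi, hov⟩, rfl, rfl⟩
  · rintro ⟨i, ⟨hi, hov⟩, rfl, rfl⟩
    rcases nextAfter_mem_or_eq (Q := Q) (i := i) (d := i + S.length) with ⟨hn, hin⟩ | heq
    · exact ⟨⟨hi, hn, hin, rfl⟩, hov⟩
    · omega

lemma finsum_mem_ovOcc :
    ∑ᶠ q ∈ OvOcc T S, (S.length - (q.2 - q.1))
      = ∑ i ∈ Q, (S.length - (nextAfter Q i (i + S.length) - i)) := by
  rw [ovOcc_eq_image hQ, finsum_mem_image fun _ _ _ _ h => (Prod.mk.inj h).1,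
    finsum_mem_coe_finset]
  exact sum_filter_of_ne fun i _ h => by omega

lemma covered_eq : Covered T S = ↑(Q.biUnion fun i => Ico i (i + S.length)) := by
  ext k
  simp only [Covered, coe_biUnion, mem_coe, coe_Ico, Set.mem_iUnion, Set.mem_Ico,
    Set.mem_ofPred_eq, hQ, exists_prop]

lemma occ_eq_card : Occ T S = Q.card := by
  rw [Occ, ← Set.ncard_coe_finset]
  congr
  ext i
  simp [hQ]

end occurrences

theorem stmt8_general {α : Type*} (T S : List α) (hS : S ≠ []) :
    Cov T S = Occ T S * S.length - ∑ᶠ q ∈ OvOcc T S, (S.length - (q.2 - q.1)) := by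
  obtain ⟨Q, hQ⟩ : ∃ Q : Finset ℕ, ∀ i, i ∈ Q ↔ occursAt T S i :=
    ⟨(finite_setOf_occursAt hS).toFinset, fun _ => Set.Finite.mem_toFinset _⟩
  rw [Cov, covered_eq hQ, Set.ncard_coe_finset, card_biUnion_Ico_eq_sum_min, occ_eq_card hQ,
    finsum_mem_ovOcc hQ]
  have hsplit : ∑ i ∈ Q, (S.length - (nextAfter Q i (i + S.length) - i))
      + ∑ i ∈ Q, min S.length (nextAfter Q i (i + S.length) - i) = Q.card * S.length := by
    simp only [← sum_add_distrib, tsub_add_min, sum_const, smul_eq_mul]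
  omega

theorem stmt8 {α : Type*} (T S : List α) (hS : S ≠ [])
    (hsub : ∃ i, occursAt T S i) :
    Cov T S = Occ T S * S.length - ∑ᶠ q ∈ OvOcc T S, (S.length - (q.2 - q.1)) :=
  stmt8_general T S hS
end

section
/- For every substring C of a string T, there exists a substring C' of T with |C'| = |C| and Cov(C') ≥ Cov(C) such that C' is either right-branching in T (occurrences of C' in T are followed by at least two distinct characters) or C' is a suffix of T. -/
lemma occ_le {α : Type*} {T S : List α} {i : ℕ} (hS : S ≠ []) (h : occursAt T S i) :
    i + S.length ≤ T.length := by
  have h1 : 0 < S.length := List.length_pos_iff.mpr hS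
  have := congrArg List.length h
  simp [List.length_take, List.length_drop] at this
  omega

lemma occ_suffix {α : Type*} {T S : List α} {i : ℕ} (h : occursAt T S i)
    (he : i + S.length = T.length) : S <:+ T := by
  have hlen : (T.drop i).length = S.length := by simp [List.length_drop]; omega
  have : T.drop i = S := by
    rw [← h, List.take_of_length_le (le_of_eq hlen)]
  exact this ▸ List.drop_suffix i T

lemma occ_shift {α : Type*} {T S : List α} {j : ℕ} (hS : S ≠ []) (h : occursAt T S j)
    (a : α) (ha : T[j + S.length]? = some a) :
    occursAt T (S.drop 1 ++ [a]) (j + 1) := by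
  have h1 : 1 ≤ S.length := List.length_pos_iff.mpr hS
  have hlt : j + S.length < T.length := by
    by_contra hn
    rw [List.getElem?_eq_none (by omega)] at ha
    exact absurd ha (by simp)
  have hdec : T.drop j = S ++ T.drop (j + S.length) := by
    conv_lhs => rw [← List.take_append_drop S.length (T.drop j)]
    rw [h, List.drop_drop]
  have hdrop : T.drop (j+1) = S.drop 1 ++ T.drop (j + S.length) := by
    have h2 : T.drop (j+1) = (T.drop j).drop 1 := by rw [List.drop_drop]
    rw [h2, hdec, List.drop_append_of_le_length h1]
  obtain ⟨b, l, hT⟩ : ∃ b l, T.drop (j + S.length) = b :: l := by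
    cases hT : T.drop (j + S.length) with
    | nil => exfalso; have := congrArg List.length hT; simp at this; omega
    | cons b l => exact ⟨b, l, rfl⟩
  have hb : b = a := by
    have : (T.drop (j + S.length))[0]? = some a := by
      rw [List.getElem?_drop]; simpa using ha
    rw [hT] at this; simpa using this
  subst hb
  unfold occursAt
  rw [hdrop, hT]
  have hl : (S.drop 1 ++ [b]).length = (S.drop 1).length + 1 := by simp
  rw [hl, List.take_append]
  simp

lemma cov_le {α : Type*} {T C C' : List α} (hC' : C' ≠ []) (hlen : C'.length = C.length)
    (hshift : ∀ j, occursAt T C j → occursAt T C' (j+1)) :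
    Cov T C ≤ Cov T C' := by
  have himg : (fun k => k+1) '' Covered T C ⊆ Covered T C' := by
    rintro _ ⟨k, ⟨j, hj, h1, h2⟩, rfl⟩
    show k + 1 ∈ Covered T C'
    exact ⟨j+1, hshift j hj, by omega, by rw [hlen]; omega⟩
  have hfin : (Covered T C').Finite := (Set.finite_Iio T.length).subset (by
    rintro k ⟨j, hj, _, h2⟩
    exact lt_of_lt_of_le h2 (occ_le hC' hj))
  calc Cov T C = ((fun k => k+1) '' Covered T C).ncard :=
        (Set.ncard_image_of_injective _ (fun a b h => by omega)).symm
    _ ≤ Cov T C' := Set.ncard_le_ncard himg hfin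

lemma key {α : Type*} (n : ℕ) : ∀ (T C : List α) (i : ℕ), C ≠ [] → occursAt T C i →
    T.length - C.length - i ≤ n →
    ∃ C' : List α, (∃ i, occursAt T C' i) ∧ C'.length = C.length ∧
      Cov T C ≤ Cov T C' ∧ (RightBranching T C' ∨ C' <:+ T) := by
  induction n with
  | zero =>
    intro T C i hC h hn
    have hle := occ_le hC h
    have : i + C.length = T.length := by omega
    exact ⟨C, ⟨i, h⟩, rfl, le_rfl, Or.inr (occ_suffix h this)⟩
  | succ n ih =>
    intro T C i hC h hn
    by_cases hrb : RightBranching T C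
    · exact ⟨C, ⟨i, h⟩, rfl, le_rfl, Or.inl hrb⟩
    by_cases hend : i + C.length = T.length
    · exact ⟨C, ⟨i, h⟩, rfl, le_rfl, Or.inr (occ_suffix h hend)⟩
    have hlt : i + C.length < T.length := lt_of_le_of_ne (occ_le hC h) hend
    obtain ⟨a, ha⟩ : ∃ a, T[i + C.length]? = some a :=
      ⟨T[i + C.length]'hlt, List.getElem?_eq_getElem hlt⟩
    set C' := C.drop 1 ++ [a] with hC'
    have hsame : ∀ j, occursAt T C j → T[j + C.length]? = some a := by
      intro j hj
      by_contra hne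
      exact hrb ⟨j, i, hj, h, by rw [ha]; exact hne⟩
    have hshift : ∀ j, occursAt T C j → occursAt T C' (j+1) := fun j hj =>
      occ_shift hC hj a (hsame j hj)
    have hlenC' : C'.length = C.length := by
      have : 1 ≤ C.length := List.length_pos_iff.mpr hC
      simp [hC']
      omega
    have hC'ne : C' ≠ [] := by simp [hC']
    obtain ⟨C'', h1, h2, h3, h4⟩ := ih T C' (i+1) hC'ne (hshift i h) (by rw [hlenC']; omega)
    exact ⟨C'', h1, hlenC' ▸ h2, le_trans (cov_le hC'ne hlenC' hshift) h3, h4⟩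

theorem stmt9 {α : Type*} (T C : List α) (hC : C ≠ [])
    (hsub : ∃ i, occursAt T C i) :
    ∃ C' : List α, (∃ i, occursAt T C' i) ∧ C'.length = C.length ∧
      Cov T C ≤ Cov T C' ∧ (RightBranching T C' ∨ C' <:+ T) := by
  obtain ⟨i, h⟩ := hsub
  exact key (T.length - C.length - i) T C i hC h le_rfl
end

section
/- If (i,j) is an overlapping consecutive occurrence of S in T, then there exists a unique run (a,b,p) in T with p = j - i, a ≤ i, and i + |S| + p - 1 ≤ b; moreover i ≤ b - 2p and |S| ≤ b - p - i + 1. -/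
lemma occ_pointwise {α : Type*} {T S : List α} {i : ℕ} (h : occursAt T S i) :
    ∀ m < S.length, T[i + m]? = S[m]? := by
  intro m hm
  conv_rhs => rw [← h]
  rw [List.getElem?_take_of_lt hm, List.getElem?_drop]

lemma occ_len {α : Type*} {T S : List α} {i : ℕ} (h : occursAt T S i) :
    i + S.length ≤ T.length ∨ S.length = 0 := by
  have := congrArg List.length h
  simp only [List.length_take, List.length_drop] at this
  omega

lemma occ_of_pointwise {α : Type*} {T S : List α} {i : ℕ} (hS : 0 < S.length)
    (h : ∀ m < S.length, T[i + m]? = S[m]?) : occursAt T S i := by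
  have hlen : i + S.length ≤ T.length := by
    by_contra hc
    push_neg at hc
    have h1 := h (S.length - 1) (by omega)
    have h2 : T[i + (S.length - 1)]? = none := by
      rw [List.getElem?_eq_none_iff]; omega
    rw [h2] at h1
    have := List.getElem?_eq_none_iff.mp h1.symm
    omega
  apply List.ext_getElem?
  intro n
  by_cases hn : n < S.length
  · rw [List.getElem?_take_of_lt hn, List.getElem?_drop]
    exact h n hn
  · rw [List.getElem?_take_eq_none (by omega), eq_comm, List.getElem?_eq_none_iff]
    omega

lemma per_iff {α : Type*} (T : List α) (p a b : ℕ) (hab : a ≤ b) (hb : b < T.length) :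
    IsPeriod ((T.drop a).take (b - a + 1)) p ↔
      (1 ≤ p ∧ ∀ k, a ≤ k → k + p ≤ b → T[k]? = T[k + p]?) := by
  have hlen : ((T.drop a).take (b - a + 1)).length = b - a + 1 := by
    simp only [List.length_take, List.length_drop]; omega
  constructor
  · rintro ⟨hp, h⟩
    refine ⟨hp, fun k hk hkp => ?_⟩
    have h1 := h (k - a) (by omega)
    rwa [List.getElem?_take_of_lt (by omega), List.getElem?_drop,
      List.getElem?_take_of_lt (by omega), List.getElem?_drop,
      show a + (k - a) = k by omega, show a + (k - a + p) = k + p by omega] at h1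
  · rintro ⟨hp, h⟩
    refine ⟨hp, fun k hk => ?_⟩
    rw [hlen] at hk
    rw [List.getElem?_take_of_lt (by omega), List.getElem?_drop,
      List.getElem?_take_of_lt (by omega), List.getElem?_drop]
    rw [show a + (k + p) = (a + k) + p by omega]
    exact h (a + k) (by omega) (by omega)

theorem stmt12 {α : Type*} (T S : List α) (i j : ℕ)
    (hcons : ConsOcc T S i j) (hov : j < i + S.length) :
    ∃! r : ℕ × ℕ, IsRun T r.1 r.2 (j - i) ∧ r.1 ≤ i ∧
      i + S.length + (j - i) - 1 ≤ r.2 ∧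
      i + 2 * (j - i) ≤ r.2 ∧ S.length + (j - i) + i ≤ r.2 + 1 := by
  classical
  obtain ⟨hij, hocc_i, hocc_j, hgap⟩ := hcons
  set p := j - i with hpdef
  have hp1 : 1 ≤ p := by omega
  have hSpos : 0 < S.length := by omega
  have hpS : p < S.length := by omega
  have hi' := occ_pointwise hocc_i
  have hj' := occ_pointwise hocc_j
  have hlen : j + S.length ≤ T.length := by
    rcases occ_len hocc_j with h | h
    · exact h
    · omega
  set E := i + S.length + p - 1 with hEdef
  have hEi : i ≤ E := by omega
  have hET : E < T.length := by omega
  -- base periodicity on [i, E]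
  have hbase : ∀ k, i ≤ k → k + p ≤ E → T[k]? = T[k + p]? := by
    intro k hk hkE
    have h1 : T[k]? = S[k - i]? := by
      have := hi' (k - i) (by omega)
      rwa [show i + (k - i) = k by omega] at this
    have h2 : T[k + p]? = S[k - i]? := by
      have := hj' (k - i) (by omega)
      rwa [show j + (k - i) = k + p by omega] at this
    rw [h1, h2]
  -- left extension
  set Q : ℕ → Prop := fun a' => a' ≤ i ∧ ∀ k, a' ≤ k → k + p ≤ E → T[k]? = T[k + p]?
    with hQdef
  have hexQ : ∃ a', Q a' := ⟨i, le_refl i, hbase⟩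
  set a := Nat.find hexQ with hadef
  have hQa : Q a := Nat.find_spec hexQ
  have hai : a ≤ i := hQa.1
  -- full periodicity on [a, E]
  have haE : ∀ k, a ≤ k → k + p ≤ E → T[k]? = T[k + p]? := hQa.2
  -- right extension
  set P : ℕ → Prop := fun b' => E ≤ b' ∧ ∀ k, a ≤ k → k + p ≤ b' → T[k]? = T[k + p]?
    with hPdef
  have hPE : P E := ⟨le_refl E, haE⟩
  set b := Nat.findGreatest P (T.length - 1) with hbdef
  have hEb : E ≤ b := Nat.le_findGreatest (by omega) hPE
  have hbT : b < T.length := by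
    have := Nat.findGreatest_le (P := P) (T.length - 1)
    omega
  have hPb : P b := Nat.findGreatest_spec (m := E) (by omega) hPE
  have hab : ∀ k, a ≤ k → k + p ≤ b → T[k]? = T[k + p]? := hPb.2
  have haleb : a ≤ b := by omega
  -- minimality of p on any superinterval containing [i, E]
  have hminper : ∀ q, 1 ≤ q → (∀ k, a ≤ k → k + q ≤ b → T[k]? = T[k + q]?) → p ≤ q := by
    intro q hq1 hq
    by_contra hc
    push_neg at hc
    have hocc : occursAt T S (i + q) := by
      apply occ_of_pointwise hSpos
      intro m hm
      have := hq (i + m) (by omega) (by omega)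
      rw [show i + m + q = i + q + m by omega] at this
      rw [← this]
      exact hi' m hm
    exact hgap (i + q) (by omega) (by omega) hocc
  -- our run
  have hrun : IsRun T a b p := by
    refine ⟨haleb, hbT, ⟨(per_iff T p a b haleb hbT).mpr ⟨hp1, hab⟩, ?_⟩, by omega, ?_, ?_⟩
    · intro q hq
      obtain ⟨hq1, hq2⟩ := (per_iff T q a b haleb hbT).mp hq
      exact hminper q hq1 hq2
    · rcases Nat.eq_zero_or_pos a with h0 | h0
      · exact Or.inl h0
      · right
        have hnQ : ¬ Q (a - 1) := Nat.find_min hexQ (by omega)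
        simp only [hQdef] at hnQ
        push_neg at hnQ
        obtain ⟨k, hk1, hk2, hk3⟩ := hnQ (by omega)
        have hka : k = a - 1 := by
          by_contra hne
          exact hk3 (haE k (by omega) hk2)
        rw [hka] at hk3
        exact hk3
    · by_cases hb1 : b + 1 = T.length
      · exact Or.inl hb1
      · right
        have hnP : ¬ P (b + 1) :=
          Nat.findGreatest_is_greatest (n := T.length - 1) (by omega) (by omega)
        simp only [hPdef] at hnP
        push_neg at hnP
        obtain ⟨k, hk1, hk2, hk3⟩ := hnP (by omega)
        have hkb : k + p = b + 1 := by
          by_contra hne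
          exact hk3 (hab k hk1 (by omega))
        intro heq
        apply hk3
        rw [show k = b + 1 - p by omega, show b + 1 - p + p = b + 1 by omega]
        exact heq.symm
  refine ⟨(a, b), ⟨hrun, hai, by omega, by omega, by omega⟩, ?_⟩
  -- uniqueness
  rintro ⟨a₁, b₁⟩ ⟨⟨hab₁, hb₁T, ⟨hper₁, _⟩, _, hL₁, hR₁⟩, hai₁, hEb₁, _, _⟩
  simp only at hai₁ hEb₁ hab₁ hb₁T hper₁ hL₁ hR₁
  have hEb₁' : E ≤ b₁ := by omega
  have hPon₁ : ∀ k, a₁ ≤ k → k + p ≤ b₁ → T[k]? = T[k + p]? :=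
    ((per_iff T p a₁ b₁ hab₁ hb₁T).mp hper₁).2
  have ha_le : a ≤ a₁ :=
    Nat.find_min' hexQ ⟨hai₁, fun k hk hkE => hPon₁ k hk (by omega)⟩
  have ha_eq : a₁ = a := by
    by_contra hne
    have hlt : a < a₁ := by omega
    rcases hL₁ with h0 | hneq
    · omega
    · exact hneq (hab (a₁ - 1) (by omega) (by omega))
  subst ha_eq
  have hb_le : b₁ ≤ b := Nat.le_findGreatest (by omega) ⟨hEb₁', hPon₁⟩
  have hb_eq : b₁ = b := by
    by_contra hne
    have hlt : b₁ < b := by omega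
    rcases hR₁ with h0 | hneq
    · omega
    · apply hneq
      have := hab (b₁ + 1 - p) (by omega) (by omega)
      rwa [show b₁ + 1 - p + p = b₁ + 1 by omega, eq_comm] at this
  simp [hb_eq]
end

section
/- For any string T and any substring S of T, the number of overlapping consecutive occurrences of S in T equals the number of pairs (R, i) where R = (a,b,p) is a run in T with p < |S|, a ≤ i ≤ b - 2p, |S| ≤ b - p - i + 1, and T[i..i+|S|) = S. -/
section Core
variable {α : Type*}

/-- `T` has period `p` on the window `[x, y)`. -/
def Per (T : List α) (x y p : ℕ) : Prop := ∀ t, x ≤ t → t + p < y → T[t]? = T[t+p]?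

lemma Per.mono {T : List α} {x y x' y' p : ℕ} (h : Per T x y p) (hx : x ≤ x') (hy : y' ≤ y) :
    Per T x' y' p := fun t ht hty => h t (hx.trans ht) (lt_of_lt_of_le hty hy)

lemma Per.steps {T : List α} {x y r : ℕ} (h : Per T x y r) :
    ∀ u v, x ≤ u → u ≤ v → r ∣ (v - u) → v < y → T[u]? = T[v]? := by
  intro u v hu huv hd hv
  obtain ⟨k, hk⟩ := hd
  induction k generalizing u with
  | zero =>
    rw [Nat.mul_zero] at hk
    have : u = v := by omega
    rw [this]
  | succ n ih =>
    rcases Nat.eq_zero_or_pos r with hr | hr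
    · subst hr
      rw [Nat.zero_mul] at hk
      have : u = v := by omega
      rw [this]
    · rw [Nat.mul_succ] at hk
      have hrn : 0 ≤ r * n := Nat.zero_le _
      have h1 : T[u]? = T[u+r]? := h u hu (by omega)
      rw [h1]
      exact ih (u + r) (by omega) (by omega) (by omega)

/-- subtraction step for Fine–Wilf -/
lemma Per.sub {T : List α} {x y p q : ℕ} (hp : Per T x y p) (hq : Per T x y q)
    (hq1 : 1 ≤ q) (hqp : q < p) (hlen : x + p + q ≤ y) : Per T x y (p - q) := by
  intro t ht htl
  by_cases hc : t + p < y
  · have h1 : T[t]? = T[t+p]? := hp t ht hc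
    have h2 : T[t + (p - q)]? = T[t + (p-q) + q]? := hq (t + (p-q)) (by omega) (by omega)
    have h3 : t + (p - q) + q = t + p := by omega
    rw [h1, ← h3, ← h2]
  · have ht2 : x + q ≤ t := by omega
    have h1 : T[t - q]? = T[t - q + q]? := hq (t - q) (by omega) (by omega)
    have h2 : T[t - q]? = T[t - q + p]? := hp (t - q) (by omega) (by omega)
    have e1 : t - q + q = t := by omega
    have e2 : t - q + p = t + (p - q) := by omega
    rw [e1] at h1
    rw [e2] at h2
    rw [← h1, h2]

lemma fine_wilf_aux {T : List α} {x y : ℕ} :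
    ∀ n p q, p + q ≤ n → 1 ≤ p → 1 ≤ q → Per T x y p → Per T x y q →
      x + p + q ≤ y → Per T x y (Nat.gcd p q) := by
  intro n
  induction n with
  | zero => intro p q h hp1; omega
  | succ n ih =>
    intro p q hn hp1 hq1 hp hq hlen
    rcases lt_trichotomy p q with hlt | heq | hgt
    · have hsub : Per T x y (q - p) := hq.sub hp hp1 hlt (by omega)
      have := ih p (q - p) (by omega) hp1 (by omega) hp hsub (by omega)
      have hg : Nat.gcd p (q - p) = Nat.gcd p q := Nat.gcd_sub_self_right (le_of_lt hlt)
      rwa [hg] at this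
    · subst heq
      rwa [Nat.gcd_self]
    · have hsub : Per T x y (p - q) := hp.sub hq hq1 hgt (by omega)
      have := ih q (p - q) (by omega) hq1 (by omega) hq hsub (by omega)
      have hg : Nat.gcd q (p - q) = Nat.gcd q p := Nat.gcd_sub_self_right (le_of_lt hgt)
      rwa [hg, Nat.gcd_comm] at this

lemma fine_wilf {T : List α} {x y p q : ℕ} (hp : Per T x y p) (hq : Per T x y q)
    (hp1 : 1 ≤ p) (hq1 : 1 ≤ q) (hlen : x + p + q ≤ y) : Per T x y (Nat.gcd p q) :=
  fine_wilf_aux (p + q) p q le_rfl hp1 hq1 hp hq hlen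

/-- right extension by one position -/
lemma per_ext_right {T : List α} {a e d p g : ℕ} (hp : Per T a e p) (hg : Per T a d g)
    (hgp : g ∣ p) (hg1 : 1 ≤ g) (hp1 : 1 ≤ p) (hd : a + p + g ≤ d) (hde : d < e) :
    Per T a (d+1) g := by
  intro t ht hte
  by_cases h : t + g < d
  · exact hg t ht h
  · have htg : t + g = d := by omega
    have h1 : T[d - p]? = T[d - p + p]? := hp (d - p) (by omega) (by omega)
    have h2 : T[t - p]? = T[t - p + p]? := hp (t - p) (by omega) (by omega)
    have h3 : T[t - p]? = T[t - p + g]? := hg (t - p) (by omega) (by omega)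
    have e1 : d - p + p = d := by omega
    have e2 : t - p + p = t := by omega
    have e3 : t - p + g = d - p := by omega
    rw [e1] at h1; rw [e2] at h2; rw [e3] at h3
    rw [← h2, h3, h1, htg]

/-- left extension by one position -/
lemma per_ext_left {T : List α} {a e c d p g : ℕ} (hp : Per T a e p) (hg : Per T c d g)
    (hgp : g ∣ p) (hg1 : 1 ≤ g) (hp1 : 1 ≤ p) (hd : c + p + g ≤ d) (hde : d ≤ e)
    (hac : a < c) : Per T (c-1) d g := by
  intro t ht hte
  by_cases h : c ≤ t
  · exact hg t h hte
  · have htc : t = c - 1 := by omega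
    have hgle : g ≤ p := Nat.le_of_dvd (by omega) hgp
    have h1 : T[t]? = T[t + p]? := hp t (by omega) (by omega)
    have h2 : T[t + g]? = T[t + p]? := by
      refine hg.steps (t + g) (t + p) (by omega) (by omega) ?_ (by omega)
      have : t + p - (t + g) = p - g := by omega
      rw [this]
      exact Nat.dvd_sub hgp dvd_rfl
    rw [h1, ← h2]

/-- propagation of a dividing period from a window to the whole run -/
lemma per_propagate {T : List α} {a e c d p g : ℕ} (hp : Per T a e p) (hg : Per T c d g)
    (hgp : g ∣ p) (hg1 : 1 ≤ g) (hp1 : 1 ≤ p) (hac : a ≤ c) (hde : d ≤ e)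
    (hwin : c + p + g ≤ d) : Per T a e g := by
  -- first extend left to a
  have hleft : ∀ k, k ≤ c - a → Per T (c - k) d g := by
    intro k
    induction k with
    | zero => intro _; simpa using hg
    | succ m ih =>
      intro hm
      have hih := ih (by omega)
      have hstep := per_ext_left hp hih hgp hg1 hp1 (by omega) hde (by omega : a < c - m)
      have : c - (m+1) = c - m - 1 := by omega
      rwa [this]
  have hA : Per T a d g := by
    have := hleft (c - a) le_rfl
    have e1 : c - (c - a) = a := by omega
    rwa [e1] at this
  -- then extend right to e
  have hright : ∀ k, d + k ≤ e → Per T a (d + k) g := by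
    intro k
    induction k with
    | zero => intro _; simpa using hA
    | succ m ih =>
      intro hm
      have hih := ih (by omega)
      have hstep := per_ext_right hp hih hgp hg1 hp1 (by omega) (by omega : d + m < e)
      have : d + (m+1) = d + m + 1 := by omega
      rwa [this]
  have := hright (e - d) (by omega)
  have e1 : d + (e - d) = e := by omega
  rwa [e1] at this

end Core
section Conv
variable {α : Type*}

lemma occursAt_iff {T S : List α} {i : ℕ} :
    occursAt T S i ↔ ∀ n, n < S.length → T[i+n]? = S[n]? := by
  unfold occursAt
  constructor
  · intro h n hn
    have := congrArg (fun l => l[n]?) h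
    simp only [List.getElem?_take, List.getElem?_drop, hn, if_pos hn] at this
    exact this
  · intro h
    apply List.ext_getElem?
    intro n
    by_cases hn : n < S.length
    · simp only [List.getElem?_take, List.getElem?_drop, if_pos hn]
      exact h n hn
    · rw [List.getElem?_eq_none (by simp; omega), List.getElem?_eq_none (by omega)]

lemma occursAt_len {T S : List α} {i : ℕ} (hS : S ≠ []) (h : occursAt T S i) :
    i + S.length ≤ T.length := by
  have hlen : 1 ≤ S.length := by
    cases S with
    | nil => exact absurd rfl hS
    | cons a l => simp
  rw [occursAt_iff] at h
  have h1 := h (S.length - 1) (by omega)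
  by_contra hc
  push_neg at hc
  rw [List.getElem?_eq_none (by omega)] at h1
  rw [List.getElem?_eq_getElem (by omega : S.length - 1 < S.length)] at h1
  simp at h1

lemma occ_occ_per {T S : List α} {i q : ℕ} (h1 : occursAt T S i)
    (h2 : occursAt T S (i + q)) : Per T i (i + q + S.length) q := by
  rw [occursAt_iff] at h1 h2
  intro t ht htl
  have hn : t - i < S.length := by omega
  have e1 : t = i + (t - i) := by omega
  rw [e1, h1 _ hn]
  have e2 : i + (t - i) + q = i + q + (t - i) := by omega
  rw [e2, h2 _ hn]

lemma per_occ {T S : List α} {x y i q : ℕ} (h : Per T x y q) (h1 : occursAt T S i)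
    (hx : x ≤ i) (hy : i + q + S.length ≤ y) : occursAt T S (i + q) := by
  rw [occursAt_iff] at h1 ⊢
  intro n hn
  have e1 : i + q + n = (i + n) + q := by omega
  rw [e1, ← h (i + n) (by omega) (by omega), h1 n hn]

lemma getElem?_dropTake {T : List α} {a b k : ℕ} (hk : k < b - a + 1) :
    ((T.drop a).take (b - a + 1))[k]? = T[a+k]? := by
  rw [List.getElem?_take, if_pos hk, List.getElem?_drop]

lemma isPeriod_iff {T : List α} {a b p : ℕ} (hab : a ≤ b) (hb : b < T.length) :
    IsPeriod ((T.drop a).take (b - a + 1)) p ↔ (1 ≤ p ∧ Per T a (b+1) p) := by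
  have hlen : ((T.drop a).take (b - a + 1)).length = b - a + 1 := by
    simp; omega
  unfold IsPeriod
  rw [hlen]
  constructor
  · rintro ⟨h1, h⟩
    refine ⟨h1, fun t ht htl => ?_⟩
    have hk : (t - a) + p < b - a + 1 := by omega
    have := h (t - a) hk
    rw [getElem?_dropTake (by omega), getElem?_dropTake (by omega)] at this
    have e1 : a + (t - a) = t := by omega
    have e2 : a + (t - a + p) = t + p := by omega
    rwa [e1, e2] at this
  · rintro ⟨h1, h⟩
    refine ⟨h1, fun k hk => ?_⟩
    rw [getElem?_dropTake (by omega), getElem?_dropTake (by omega)]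
    have e2 : a + (k + p) = (a + k) + p := by omega
    rw [e2]
    exact h (a + k) (by omega) (by omega)

lemma minPeriod_iff {T : List α} {a b p : ℕ} (hab : a ≤ b) (hb : b < T.length) :
    MinPeriod ((T.drop a).take (b - a + 1)) p ↔
      ((1 ≤ p ∧ Per T a (b+1) p) ∧ ∀ q, 1 ≤ q → Per T a (b+1) q → p ≤ q) := by
  unfold MinPeriod
  rw [isPeriod_iff hab hb]
  constructor
  · rintro ⟨h1, h2⟩
    exact ⟨h1, fun q hq1 hq2 => h2 q ((isPeriod_iff hab hb).mpr ⟨hq1, hq2⟩)⟩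
  · rintro ⟨h1, h2⟩
    refine ⟨h1, fun q hq => ?_⟩
    rw [isPeriod_iff hab hb] at hq
    exact h2 q hq.1 hq.2

end Conv
section Main
variable {α : Type*}

noncomputable def runA (T S : List α) (i j : ℕ) : ℕ :=
  sInf {a' | Per T a' (j + S.length) (j - i)}

noncomputable def runE (T S : List α) (i j : ℕ) : ℕ :=
  sInf {e | j + S.length ≤ e ∧ (e = T.length ∨ ¬ Per T (runA T S i j) (e+1) (j - i))}

noncomputable def runOf (T S : List α) (q : ℕ × ℕ) : ℕ × ℕ × ℕ × ℕ :=
  (runA T S q.1 q.2, runE T S q.1 q.2 - 1, q.2 - q.1, q.1)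

def Bset (T S : List α) : Set (ℕ × ℕ × ℕ × ℕ) :=
  {x | IsRun T x.1 x.2.1 x.2.2.1 ∧ x.2.2.1 < S.length ∧
    x.1 ≤ x.2.2.2 ∧ x.2.2.2 + 2 * x.2.2.1 ≤ x.2.1 ∧
    S.length + x.2.2.1 + x.2.2.2 ≤ x.2.1 + 1 ∧
    occursAt T S x.2.2.2}

lemma per_self {T : List α} {y p : ℕ} : Per T y y p :=
  fun t ht htl => absurd (lt_of_le_of_lt (Nat.le_add_right t p) htl) (not_lt.mpr ht)

lemma runA_le {T S : List α} {i j : ℕ} (h : Per T i (j + S.length) (j - i)) :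
    runA T S i j ≤ i := Nat.sInf_le h

lemma runA_per (T S : List α) (i j : ℕ) :
    Per T (runA T S i j) (j + S.length) (j - i) :=
 by
  have hw : Per T (j + S.length) (j + S.length) (j - i) := per_self
  have h := Nat.sInf_mem (s := {a' | Per T a' (j + S.length) (j - i)})
    ⟨j + S.length, hw⟩
  exact h

lemma runA_min (T S : List α) (i j : ℕ) (hne : runA T S i j ≠ 0) :
    T[runA T S i j - 1]? ≠ T[runA T S i j - 1 + (j - i)]? := by
  intro heq
  have h := runA_per T S i j
  have hper : Per T (runA T S i j - 1) (j + S.length) (j - i) := by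
    intro t ht htl
    rcases Nat.lt_or_ge t (runA T S i j) with hlt | hge
    · have : t = runA T S i j - 1 := by omega
      rw [this]
      exact heq
    · exact h t hge htl
  exact Nat.notMem_of_lt_sInf
    (show runA T S i j - 1 < runA T S i j by omega) hper

lemma runE_mem {T S : List α} {i j : ℕ} (hjT : j + S.length ≤ T.length) :
    j + S.length ≤ runE T S i j ∧
      (runE T S i j = T.length ∨ ¬ Per T (runA T S i j) (runE T S i j + 1) (j - i)) := by
  have h : T.length ∈ {e | j + S.length ≤ e ∧
      (e = T.length ∨ ¬ Per T (runA T S i j) (e+1) (j - i))} := ⟨hjT, Or.inl rfl⟩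
  exact Nat.sInf_mem ⟨T.length, h⟩

lemma runE_le {T S : List α} {i j : ℕ} (hjT : j + S.length ≤ T.length) :
    runE T S i j ≤ T.length := by
  have h : T.length ∈ {e | j + S.length ≤ e ∧
      (e = T.length ∨ ¬ Per T (runA T S i j) (e+1) (j - i))} := ⟨hjT, Or.inl rfl⟩
  exact Nat.sInf_le h

lemma runE_per {T S : List α} {i j : ℕ} (hjT : j + S.length ≤ T.length) :
    Per T (runA T S i j) (runE T S i j) (j - i) := by
  rcases eq_or_lt_of_le (runE_mem (T := T) (S := S) (i := i) (j := j) hjT).1 with heq | hlt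
  · rw [← heq]
    exact runA_per T S i j
  · have hnm := Nat.notMem_of_lt_sInf
      (show runE T S i j - 1 < runE T S i j by omega)
    simp only [Set.mem_setOf_eq, not_and_or, not_or, not_not] at hnm
    rcases hnm with h1 | ⟨h2, h3⟩
    · omega
    · rwa [show runE T S i j - 1 + 1 = runE T S i j by omega] at h3

lemma runE_ge {T S : List α} {i j e : ℕ} (he0 : j + S.length ≤ e) (heT : e ≤ T.length)
    (hper : Per T (runA T S i j) e (j - i))
    (hmax : e = T.length ∨ T[e]? ≠ T[e - (j - i)]?) (hp1 : 1 ≤ j - i)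
    (hae : runA T S i j + (j - i) ≤ e - (j - i)) :
    e ≤ runE T S i j := by
  by_contra hc
  push_neg at hc
  have hjT : j + S.length ≤ T.length := le_trans he0 heT
  obtain ⟨h1, h2⟩ := runE_mem (T := T) (S := S) (i := i) (j := j) hjT
  rcases h2 with h2 | h2
  · omega
  · apply h2
    exact hper.mono le_rfl (by omega)

end Main
section Main2
variable {α : Type*}

lemma length_pos_of_ne {S : List α} (hS : S ≠ []) : 1 ≤ S.length := by
  cases S with
  | nil => exact absurd rfl hS
  | cons a l => simp

lemma runOf_mem {T S : List α} (hS : S ≠ []) {i j : ℕ} (h : (i, j) ∈ OvOcc T S) :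
    runOf T S (i, j) ∈ Bset T S := by
  obtain ⟨⟨hij, hoi, hoj, hcons⟩, hover⟩ := h
  simp only at hij hoi hoj hcons hover
  have hS1 : 1 ≤ S.length := length_pos_of_ne hS
  have hp1 : 1 ≤ j - i := by omega
  have hpS : j - i < S.length := by omega
  have hiT := occursAt_len hS hoi
  have hjT := occursAt_len hS hoj
  have hperi : Per T i (j + S.length) (j - i) := by
    have h2 : occursAt T S (i + (j - i)) := by
      rw [show i + (j - i) = j by omega]; exact hoj
    have h3 := occ_occ_per hoi h2
    rwa [show i + (j - i) + S.length = j + S.length by omega] at h3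
  have hai : runA T S i j ≤ i := runA_le hperi
  have haper := runA_per T S i j
  obtain ⟨hebge, hebalt⟩ := runE_mem (T := T) (S := S) (i := i) (j := j) hjT
  have heble := runE_le (T := T) (S := S) (i := i) (j := j) hjT
  have hebper := runE_per (T := T) (S := S) (i := i) (j := j) hjT
  set a := runA T S i j with ha
  set eb := runE T S i j with heb
  have hab : a ≤ eb - 1 := by omega
  have hbT : eb - 1 < T.length := by omega
  have hrun : runOf T S (i, j) = (a, eb - 1, j - i, i) := rfl
  rw [hrun]
  show IsRun T a (eb - 1) (j - i) ∧ (j - i) < S.length ∧ a ≤ i ∧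
    i + 2 * (j - i) ≤ eb - 1 ∧ S.length + (j - i) + i ≤ (eb - 1) + 1 ∧ occursAt T S i
  refine ⟨?_, hpS, hai, by omega, by omega, hoi⟩
  refine ⟨hab, hbT, ?_, by omega, ?_, ?_⟩
  · -- MinPeriod
    rw [minPeriod_iff hab hbT]
    have heq : eb - 1 + 1 = eb := by omega
    rw [heq]
    refine ⟨⟨hp1, hebper⟩, ?_⟩
    intro q hq1 hq
    by_contra hlt
    push_neg at hlt
    have hq' : Per T i (j + S.length) q := hq.mono hai (by omega)
    have hocc := per_occ hq' hoi le_rfl (by omega)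
    exact hcons (i + q) (by omega) (by omega) hocc
  · -- left maximality
    rcases Nat.eq_zero_or_pos a with h0 | h0
    · exact Or.inl h0
    · exact Or.inr (runA_min T S i j (by omega))
  · -- right maximality
    rcases hebalt with h0 | h0
    · exact Or.inl (by omega)
    · right
      unfold Per at h0
      push_neg at h0
      obtain ⟨t, ht1, ht2, ht3⟩ := h0
      have hteq : t + (j - i) = eb := by
        by_contra hne
        exact ht3 (hebper t ht1 (by omega))
      have e1 : eb - 1 + 1 = t + (j - i) := by omega
      rw [e1, show t + (j - i) - (j - i) = t by omega]
      exact fun hcon => ht3 hcon.symm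

end Main2
section Main3
variable {α : Type*}

lemma runOf_surj {T S : List α} (hS : S ≠ []) {x : ℕ × ℕ × ℕ × ℕ}
    (hx : x ∈ Bset T S) : ∃ q ∈ OvOcc T S, runOf T S q = x := by
  obtain ⟨a, b, p, i⟩ := x
  obtain ⟨hrun, hpS, hai, h2pi, hSpi, hocc⟩ := hx
  simp only at hrun hpS hai h2pi hSpi hocc
  obtain ⟨hab, hbT, hMin, h2p, hleft, hright⟩ := hrun
  rw [minPeriod_iff hab hbT] at hMin
  obtain ⟨⟨hp1, hper⟩, hmin⟩ := hMin
  have hS1 := length_pos_of_ne hS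
  have hiT := occursAt_len hS hocc
  set j := i + p with hj
  have hoj : occursAt T S j := per_occ hper hocc hai (by omega)
  have hconsec : ∀ k, i < k → k < j → ¬ occursAt T S k := by
    intro k hik hkj hk
    have hq1 : 1 ≤ k - i := by omega
    have hkS := occursAt_len hS hk
    have hqper : Per T i (k + S.length) (k - i) := by
      have h2 : occursAt T S (i + (k - i)) := by
        rw [show i + (k - i) = k by omega]; exact hk
      have h3 := occ_occ_per hocc h2
      rwa [show i + (k - i) + S.length = k + S.length by omega] at h3
    have hpwin : Per T i (k + S.length) p := hper.mono hai (by omega)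
    have hgper := fine_wilf hpwin hqper hp1 hq1 (by omega)
    set g := Nat.gcd p (k - i) with hgdef
    have hg1 : 1 ≤ g := Nat.gcd_pos_of_pos_left _ (by omega)
    have hgp : g ∣ p := Nat.gcd_dvd_left _ _
    have hgq : g ≤ k - i := Nat.le_of_dvd (by omega) (Nat.gcd_dvd_right _ _)
    have hprop := per_propagate hper hgper hgp hg1 hp1 hai (by omega) (by omega)
    have := hmin g hg1 hprop
    omega
  have hov : (i, j) ∈ OvOcc T S := ⟨⟨by omega, hocc, hoj, hconsec⟩, by omega⟩
  refine ⟨(i, j), hov, ?_⟩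
  have hpji : j - i = p := by omega
  have hperA : Per T a (j + S.length) (j - i) := by
    rw [hpji]; exact hper.mono le_rfl (by omega)
  have hAle : runA T S i j ≤ a := Nat.sInf_le hperA
  have hAeq : runA T S i j = a := by
    rcases eq_or_lt_of_le hAle with he | hlt
    · exact he
    · exfalso
      have haper := runA_per T S i j
      have hcontra : T[a - 1]? = T[a - 1 + (j - i)]? :=
        haper (a - 1) (by omega) (by omega)
      rcases hleft with h0 | h0
      · omega
      · rw [hpji] at hcontra
        exact h0 hcontra
  have hEeq : runE T S i j = b + 1 := by
    have hperE : Per T (runA T S i j) (b + 1) (j - i) := by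
      rw [hAeq, hpji]; exact hper
    have hge : b + 1 ≤ runE T S i j :=
      runE_ge (by omega) (by omega) hperE
        (by rcases hright with h0 | h0
            · exact Or.inl h0
            · right; rw [hpji]; exact h0)
        (by omega) (by rw [hAeq, hpji]; omega)
    have hmem : b + 1 ∈ {e | j + S.length ≤ e ∧
        (e = T.length ∨ ¬ Per T (runA T S i j) (e + 1) (j - i))} := by
      refine ⟨by omega, ?_⟩
      rcases hright with h0 | h0
      · exact Or.inl h0
      · right
        intro hper2
        apply h0
        have := hper2 (b + 1 - p) (by rw [hAeq]; omega) (by omega)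
        rw [show b + 1 - p + (j - i) = b + 1 by omega] at this
        exact this.symm
    have hle : runE T S i j ≤ b + 1 := Nat.sInf_le hmem
    omega
  have : runOf T S (i, j) = (runA T S i j, runE T S i j - 1, j - i, i) := rfl
  rw [this, hAeq, hEeq, hpji]
  simp

end Main3

theorem stmt13 {α : Type*} (T S : List α) (hS : S ≠ [])
    (hsub : ∃ i, occursAt T S i) :
    (OvOcc T S).ncard =
      {x : ℕ × ℕ × ℕ × ℕ |
        IsRun T x.1 x.2.1 x.2.2.1 ∧ x.2.2.1 < S.length ∧
        x.1 ≤ x.2.2.2 ∧ x.2.2.2 + 2 * x.2.2.1 ≤ x.2.1 ∧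
        S.length + x.2.2.1 + x.2.2.2 ≤ x.2.1 + 1 ∧
        occursAt T S x.2.2.2}.ncard := by
  have hset : {x : ℕ × ℕ × ℕ × ℕ |
        IsRun T x.1 x.2.1 x.2.2.1 ∧ x.2.2.1 < S.length ∧
        x.1 ≤ x.2.2.2 ∧ x.2.2.2 + 2 * x.2.2.1 ≤ x.2.1 ∧
        S.length + x.2.2.1 + x.2.2.2 ≤ x.2.1 + 1 ∧
        occursAt T S x.2.2.2} = Bset T S := rfl
  rw [hset]
  have himg : Bset T S = runOf T S '' OvOcc T S := by
    ext x
    constructor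
    · intro hx
      obtain ⟨q, hq, hqe⟩ := runOf_surj hS hx
      exact ⟨q, hq, hqe⟩
    · rintro ⟨q, hq, rfl⟩
      obtain ⟨i, j⟩ := q
      exact runOf_mem hS hq
  have hinj : Set.InjOn (runOf T S) (OvOcc T S) := by
    rintro ⟨i, j⟩ hq ⟨i', j'⟩ hq' he
    have hij : i < j := hq.1.1
    have hij' : i' < j' := hq'.1.1
    have h1 : i = i' := congrArg (fun y => y.2.2.2) he
    have h2 : j - i = j' - i' := congrArg (fun y => y.2.2.1) he
    have : j = j' := by omega
    simp [h1, this]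
  rw [himg, Set.ncard_image_of_injOn hinj]
end
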